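/- arXiv:2105.06223 — 2 statements merged into one kernel-verified Lean document; each statement's English description precedes it below -/
import Mathlib

section
/- (Torsion of the VSI teleparallel coframe is of alignment type III.) On ℝ⁴ with coordinates (v,u,x,y), let H⁽¹⁾, H⁽⁰⁾, W₁, W₂ be smooth real functions of (u,x,y), M₀ a smooth complex function of (u,x,y), and M₁ a smooth nowhere-vanishing complex function of u alone; set H = H⁽¹⁾·v + H⁽⁰⁾ and define the coframe h¹ = dv + H du + W₁ dx + W₂ dy, h² = du, h³ = Re(M₀) du + Re(M₁) dx − Im(M₁) dy, h⁴ = Im(M₀) du + Im(M₁) dx + Re(M₁) dy (the real form of the coframe n, ℓ, m = M₀ du + M₁(dx + i dy)). With zero spin connection (proper frame), the torsion two-forms are T^a = dh^a, with coordinate components T^a_{μν} = ∂_μ h^a_ν − ∂_ν h^a_μ. Let e_b denote the dual frame (h^a(e_b) = δ^a_b) and define the frame components T_{abc} = Σ_d η_{ad} T^d_{μν} e_b^μ e_c^ν (summed over μ, ν). Then every frame component T_{abc} of boost weight ≥ 0 vanishes identically; i.e. the torsion tensor is of alignment type III relative to this null frame. -/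
/-- The null-frame Minkowski metric on `ℝ⁴` in the frame order `(n, ℓ, Re m, Im m)`
(indices 0,1,2,3 for 1,2,3,4). -/
noncomputable def eta : Fin 4 → Fin 4 → ℝ := fun a b =>
  if (a = 0 ∧ b = 1) ∨ (a = 1 ∧ b = 0) then -1
  else if (a = 2 ∧ b = 2) ∨ (a = 3 ∧ b = 3) then 1 else 0

/-- The boost weight of a single frame index. -/
def bwIdx (a : Fin 4) : ℤ := if a = 0 then 1 else if a = 1 then -1 else 0

/-- The boost weight of a rank-3 frame component. -/
def bw3 (a b c : Fin 4) : ℤ := bwIdx a + bwIdx b + bwIdx c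

/-- The VSI proper coframe `h¹ = dv + H du + W₁ dx + W₂ dy`, `h² = du`,
`h³ = Re(M₀) du + Re(M₁) dx − Im(M₁) dy`, `h⁴ = Im(M₀) du + Im(M₁) dx + Re(M₁) dy`,
with `H = H⁽¹⁾·v + H⁽⁰⁾`, in coordinates `p = (v,u,x,y)` (so `p 0 = v`, `p 1 = u`,
`p 2 = x`, `p 3 = y`); `VSIcoframe … a p μ` is the `μ`-th coordinate component `h^a_μ` at `p`. -/
noncomputable def VSIcoframe (H1 H0 W1 W2 : ℝ → ℝ → ℝ → ℝ) (M0 : ℝ → ℝ → ℝ → ℂ) (M1 : ℝ → ℂ) :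
    Fin 4 → (Fin 4 → ℝ) → Fin 4 → ℝ :=
  fun a p =>
    ![![1, H1 (p 1) (p 2) (p 3) * p 0 + H0 (p 1) (p 2) (p 3),
        W1 (p 1) (p 2) (p 3), W2 (p 1) (p 2) (p 3)],
      ![0, 1, 0, 0],
      ![0, (M0 (p 1) (p 2) (p 3)).re, (M1 (p 1)).re, -((M1 (p 1)).im)],
      ![0, (M0 (p 1) (p 2) (p 3)).im, (M1 (p 1)).im, (M1 (p 1)).re]] a

/-- The coordinate components `T^d_{μν} = ∂_μ h^d_ν − ∂_ν h^d_μ` of the torsion of a coframe with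
zero spin connection. -/
noncomputable def Tcoord (h : Fin 4 → (Fin 4 → ℝ) → Fin 4 → ℝ) (d μ ν : Fin 4)
    (p : Fin 4 → ℝ) : ℝ :=
  fderiv ℝ (fun q => h d q ν) p (Pi.single μ 1) - fderiv ℝ (fun q => h d q μ) p (Pi.single ν 1)

/-- The lowered frame components `T_{abc} = Σ_d η_{ad} T^d_{μν} e_b^μ e_c^ν` of the torsion. -/
noncomputable def Tframe (h : Fin 4 → (Fin 4 → ℝ) → Fin 4 → ℝ)
    (e : (Fin 4 → ℝ) → Fin 4 → Fin 4 → ℝ) (p : Fin 4 → ℝ) (a b c : Fin 4) : ℝ :=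
  ∑ d, eta a d * ∑ μ, ∑ ν, Tcoord h d μ ν p * e p b μ * e p c ν

/-- Smoothness of a real-valued function of three real variables. -/
def Smooth3R (F : ℝ → ℝ → ℝ → ℝ) : Prop :=
  ContDiff ℝ (⊤ : ℕ∞) fun q : ℝ × ℝ × ℝ => F q.1 q.2.1 q.2.2

/-- Smoothness of a complex-valued function of three real variables. -/
def Smooth3C (F : ℝ → ℝ → ℝ → ℂ) : Prop :=
  ContDiff ℝ (⊤ : ℕ∞) fun q : ℝ × ℝ × ℝ => F q.1 q.2.1 q.2.2


noncomputable def L3 : (Fin 4 → ℝ) →L[ℝ] (ℝ × ℝ × ℝ) :=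
  (ContinuousLinearMap.proj 1).prod ((ContinuousLinearMap.proj 2).prod (ContinuousLinearMap.proj 3))

lemma fderiv_comp3 (F : ℝ × ℝ × ℝ → ℝ) (hF : ContDiff ℝ (⊤ : ℕ∞) F) (p v : Fin 4 → ℝ) :
    fderiv ℝ (fun q : Fin 4 → ℝ => F (q 1, q 2, q 3)) p v
      = fderiv ℝ F (p 1, p 2, p 3) (v 1, v 2, v 3) := by
  have : (fun q : Fin 4 → ℝ => F (q 1, q 2, q 3)) = F ∘ L3 := rfl
  rw [this, fderiv_comp p (hF.differentiable (by simp)).differentiableAt L3.differentiableAt,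
    L3.fderiv]
  rfl

lemma dv_zero (F : ℝ × ℝ × ℝ → ℝ) (hF : ContDiff ℝ (⊤ : ℕ∞) F) (p : Fin 4 → ℝ) :
    fderiv ℝ (fun q : Fin 4 → ℝ => F (q 1, q 2, q 3)) p (Pi.single (0 : Fin 4) 1) = 0 := by
  rw [fderiv_comp3 F hF]
  have h1 : (Pi.single (M := fun _ : Fin 4 => ℝ) 0 1) 1 = 0 := by simp
  have h2 : (Pi.single (M := fun _ : Fin 4 => ℝ) 0 1) 2 = 0 := by simp
  have h3 : (Pi.single (M := fun _ : Fin 4 => ℝ) 0 1) 3 = 0 := by simp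
  rw [h1, h2, h3]
  have h0 : ((0:ℝ), (0:ℝ), (0:ℝ)) = (0 : ℝ × ℝ × ℝ) := rfl
  rw [h0, map_zero]

lemma dxy_zero (G : ℝ → ℝ) (hG : ContDiff ℝ (⊤ : ℕ∞) G) (p : Fin 4 → ℝ) (μ : Fin 4) (hμ : μ ≠ 1) :
    fderiv ℝ (fun q : Fin 4 → ℝ => G (q 1)) p (Pi.single μ 1) = 0 := by
  have h : (fun q : Fin 4 → ℝ => G (q 1))
      = G ∘ (ContinuousLinearMap.proj (R := ℝ) (φ := fun _ : Fin 4 => ℝ) 1) := rfl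
  rw [h, fderiv_comp p (hG.differentiable (by simp)).differentiableAt
      (ContinuousLinearMap.proj 1).differentiableAt, ContinuousLinearMap.fderiv]
  have h2 : (ContinuousLinearMap.proj (R := ℝ) (φ := fun _ : Fin 4 => ℝ) 1) (Pi.single μ 1) = 0 :=
    Pi.single_eq_of_ne (Ne.symm hμ) _
  simp [h2]

/-- the torsion of the VSI teleparallel proper coframe is of alignment type III:
all frame components of nonnegative boost weight vanish identically. -/
theorem VSI_torsion_typeIII
    (H1 H0 W1 W2 : ℝ → ℝ → ℝ → ℝ) (M0 : ℝ → ℝ → ℝ → ℂ) (M1 : ℝ → ℂ)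
    (hH1 : Smooth3R H1) (hH0 : Smooth3R H0) (hW1 : Smooth3R W1) (hW2 : Smooth3R W2)
    (hM0 : Smooth3C M0) (hM1s : ContDiff ℝ (⊤ : ℕ∞) M1) (hM1 : ∀ u, M1 u ≠ 0)
    (e : (Fin 4 → ℝ) → Fin 4 → Fin 4 → ℝ)
    (he : ∀ (p : Fin 4 → ℝ) (a b : Fin 4),
      (∑ μ, VSIcoframe H1 H0 W1 W2 M0 M1 a p μ * e p b μ) = if a = b then 1 else 0) :
    ∀ (p : Fin 4 → ℝ) (a b c : Fin 4), 0 ≤ bw3 a b c →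
      Tframe (VSIcoframe H1 H0 W1 W2 M0 M1) e p a b c = 0 := by
  classical
  intro p a b c hbw
  set h := VSIcoframe H1 H0 W1 W2 M0 M1 with hhdef
  -- smoothness of the scalar components
  have sW1 : ContDiff ℝ (⊤ : ℕ∞) (fun t : ℝ × ℝ × ℝ => W1 t.1 t.2.1 t.2.2) := hW1
  have sW2 : ContDiff ℝ (⊤ : ℕ∞) (fun t : ℝ × ℝ × ℝ => W2 t.1 t.2.1 t.2.2) := hW2
  have sM0re : ContDiff ℝ (⊤ : ℕ∞) (fun t : ℝ × ℝ × ℝ => (M0 t.1 t.2.1 t.2.2).re) :=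
    Complex.reCLM.contDiff.comp hM0
  have sM0im : ContDiff ℝ (⊤ : ℕ∞) (fun t : ℝ × ℝ × ℝ => (M0 t.1 t.2.1 t.2.2).im) :=
    Complex.imCLM.contDiff.comp hM0
  have sM1re : ContDiff ℝ (⊤ : ℕ∞) (fun u : ℝ => (M1 u).re) := Complex.reCLM.contDiff.comp hM1s
  have sM1im : ContDiff ℝ (⊤ : ℕ∞) (fun u : ℝ => (M1 u).im) := Complex.imCLM.contDiff.comp hM1s
  have sM1imneg : ContDiff ℝ (⊤ : ℕ∞) (fun u : ℝ => -(M1 u).im) := sM1im.neg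
  -- antisymmetry and diagonal
  have Tanti : ∀ (d μ ν : Fin 4), Tcoord h d μ ν p = - Tcoord h d ν μ p := by
    intro d μ ν; simp [Tcoord]
  have Tdiag : ∀ (d μ : Fin 4), Tcoord h d μ μ p = 0 := by
    intro d μ; simp [Tcoord]
  -- d = 1 : h² = du is closed
  have T1 : ∀ (μ ν : Fin 4), Tcoord h 1 μ ν p = 0 := by
    intro μ ν
    have c1 : ∀ κ : Fin 4, (fun q : Fin 4 → ℝ => h 1 q κ) = fun _ => ![(0:ℝ),1,0,0] κ :=
      fun κ => rfl
    simp [Tcoord, c1]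
  -- d = 2 : rows/cols with a 0 index vanish
  have T2r0 : ∀ ν : Fin 4, Tcoord h 2 0 ν p = 0 := by
    intro ν
    have c0 : (fun q : Fin 4 → ℝ => h 2 q 0) = fun _ => (0:ℝ) := rfl
    fin_cases ν
    · exact Tdiag 2 0
    · have c : (fun q : Fin 4 → ℝ => h 2 q 1)
          = fun q => (fun t : ℝ × ℝ × ℝ => (M0 t.1 t.2.1 t.2.2).re) (q 1, q 2, q 3) := rfl
      simp [Tcoord, c0, c, dv_zero _ sM0re p]
    · have c : (fun q : Fin 4 → ℝ => h 2 q 2)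
          = fun q => (fun u : ℝ => (M1 u).re) (q 1) := rfl
      simp [Tcoord, c0, c, dxy_zero _ sM1re p 0 (by decide)]
    · have c : (fun q : Fin 4 → ℝ => h 2 q 3)
          = fun q => (fun u : ℝ => -(M1 u).im) (q 1) := rfl
      simp [Tcoord, c0, c, dxy_zero _ sM1imneg p 0 (by decide), dxy_zero _ sM1im p 0 (by decide)]
  have T2c0 : ∀ μ : Fin 4, Tcoord h 2 μ 0 p = 0 := by
    intro μ; rw [Tanti, T2r0, neg_zero]
  have T3r0 : ∀ ν : Fin 4, Tcoord h 3 0 ν p = 0 := by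
    intro ν
    have c0 : (fun q : Fin 4 → ℝ => h 3 q 0) = fun _ => (0:ℝ) := rfl
    fin_cases ν
    · exact Tdiag 3 0
    · have c : (fun q : Fin 4 → ℝ => h 3 q 1)
          = fun q => (fun t : ℝ × ℝ × ℝ => (M0 t.1 t.2.1 t.2.2).im) (q 1, q 2, q 3) := rfl
      simp [Tcoord, c0, c, dv_zero _ sM0im p]
    · have c : (fun q : Fin 4 → ℝ => h 3 q 2)
          = fun q => (fun u : ℝ => (M1 u).im) (q 1) := rfl
      simp [Tcoord, c0, c, dxy_zero _ sM1im p 0 (by decide)]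
    · have c : (fun q : Fin 4 → ℝ => h 3 q 3)
          = fun q => (fun u : ℝ => (M1 u).re) (q 1) := rfl
      simp [Tcoord, c0, c, dxy_zero _ sM1re p 0 (by decide)]
  have T3c0 : ∀ μ : Fin 4, Tcoord h 3 μ 0 p = 0 := by
    intro μ; rw [Tanti, T3r0, neg_zero]
  -- d = 2,3 : the (2,3) components vanish
  have T223 : Tcoord h 2 2 3 p = 0 := by
    have c2 : (fun q : Fin 4 → ℝ => h 2 q 2) = fun q => (fun u : ℝ => (M1 u).re) (q 1) := rfl
    have c3 : (fun q : Fin 4 → ℝ => h 2 q 3) = fun q => (fun u : ℝ => -(M1 u).im) (q 1) := rfl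
    simp [Tcoord, c2, c3, dxy_zero _ sM1re p 3 (by decide), dxy_zero _ sM1imneg p 2 (by decide),
      dxy_zero _ sM1im p 2 (by decide)]
  have T232 : Tcoord h 2 3 2 p = 0 := by rw [Tanti, T223, neg_zero]
  have T323 : Tcoord h 3 2 3 p = 0 := by
    have c2 : (fun q : Fin 4 → ℝ => h 3 q 2) = fun q => (fun u : ℝ => (M1 u).im) (q 1) := rfl
    have c3 : (fun q : Fin 4 → ℝ => h 3 q 3) = fun q => (fun u : ℝ => (M1 u).re) (q 1) := rfl
    simp [Tcoord, c2, c3, dxy_zero _ sM1im p 3 (by decide), dxy_zero _ sM1re p 2 (by decide)]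
  have T332 : Tcoord h 3 3 2 p = 0 := by rw [Tanti, T323, neg_zero]
  -- d = 0 : the (0,0), (0,2), (0,3) components vanish
  have T002 : Tcoord h 0 0 2 p = 0 := by
    have c0 : (fun q : Fin 4 → ℝ => h 0 q 0) = fun _ => (1:ℝ) := rfl
    have c2 : (fun q : Fin 4 → ℝ => h 0 q 2)
        = fun q => (fun t : ℝ × ℝ × ℝ => W1 t.1 t.2.1 t.2.2) (q 1, q 2, q 3) := rfl
    simp [Tcoord, c0, c2, dv_zero _ sW1 p]
  have T003 : Tcoord h 0 0 3 p = 0 := by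
    have c0 : (fun q : Fin 4 → ℝ => h 0 q 0) = fun _ => (1:ℝ) := rfl
    have c3 : (fun q : Fin 4 → ℝ => h 0 q 3)
        = fun q => (fun t : ℝ × ℝ × ℝ => W2 t.1 t.2.1 t.2.2) (q 1, q 2, q 3) := rfl
    simp [Tcoord, c0, c3, dv_zero _ sW2 p]
  have T020 : Tcoord h 0 2 0 p = 0 := by rw [Tanti, T002, neg_zero]
  have T030 : Tcoord h 0 3 0 p = 0 := by rw [Tanti, T003, neg_zero]
  -- dual frame facts
  have hD : (M1 (p 1)).re ^ 2 + (M1 (p 1)).im ^ 2 ≠ 0 := by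
    intro h0
    have hre : (M1 (p 1)).re ^ 2 = 0 := by
      nlinarith [sq_nonneg (M1 (p 1)).re, sq_nonneg (M1 (p 1)).im]
    have him : (M1 (p 1)).im ^ 2 = 0 := by
      nlinarith [sq_nonneg (M1 (p 1)).re, sq_nonneg (M1 (p 1)).im]
    exact hM1 (p 1) (Complex.ext (pow_eq_zero_iff two_ne_zero |>.mp hre)
      (pow_eq_zero_iff two_ne_zero |>.mp him))
  have e01 : e p 0 1 = 0 := by
    have h10 := he p 1 0
    simp [hhdef, Fin.sum_univ_four, VSIcoframe] at h10
    linarith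
  have e21 : e p 2 1 = 0 := by
    have h12 := he p 1 2
    simp [hhdef, Fin.sum_univ_four, VSIcoframe] at h12
    linarith
  have e31 : e p 3 1 = 0 := by
    have h13 := he p 1 3
    simp [hhdef, Fin.sum_univ_four, VSIcoframe] at h13
    linarith
  have h20 := he p 2 0
  have h30 := he p 3 0
  simp [hhdef, Fin.sum_univ_four, VSIcoframe, e01] at h20 h30
  have e02 : e p 0 2 = 0 := by
    have key : e p 0 2 * ((M1 (p 1)).re ^ 2 + (M1 (p 1)).im ^ 2) = 0 := by
      linear_combination (M1 (p 1)).re * h20 + (M1 (p 1)).im * h30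
    exact (mul_eq_zero.mp key).resolve_right hD
  have e03 : e p 0 3 = 0 := by
    have key : e p 0 3 * ((M1 (p 1)).re ^ 2 + (M1 (p 1)).im ^ 2) = 0 := by
      linear_combination (-(M1 (p 1)).im) * h20 + (M1 (p 1)).re * h30
    exact (mul_eq_zero.mp key).resolve_right hD
  have e00 : e p 0 0 = 1 := by
    have h00 := he p 0 0
    simp [hhdef, Fin.sum_univ_four, VSIcoframe, e01, e02, e03] at h00
    linarith
  -- main case analysis
  fin_cases a <;> fin_cases b <;> fin_cases c <;>
    first
      | exact absurd hbw (by decide)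
      | simp [Tframe, Fin.sum_univ_four, eta, T1, Tdiag, T2r0, T2c0, T3r0, T3c0,
          T223, T232, T323, T332, T002, T003, T020, T030, e00, e01, e02, e03, e21, e31]
end

section
/- A nonzero tensor of alignment type III is not characterized by its scalar polynomial invariants: let T be a rank-r tensor on ℝ⁴ with T ≠ 0 such that every component of boost weight ≥ 0 vanishes. Then every full contraction of copies of T (for every number of copies and every perfect pairing) equals zero — the same values as all full contractions of the zero tensor — yet Λ·T ≠ 0 for every η-orthogonal matrix Λ. Hence T and the zero tensor share all scalar polynomial invariants but are not related by any frame transformation. -/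
open Matrix

/-- The null-frame Minkowski metric as a matrix. -/
noncomputable def etaM : Matrix (Fin 4) (Fin 4) ℝ := Matrix.of eta

/-- The boost weight of a rank-`r` component index. -/
def bw {r : ℕ} (a : Fin r → Fin 4) : ℤ :=
  ((Finset.univ.filter fun i => a i = 0).card : ℤ) -
    ((Finset.univ.filter fun i => a i = 1).card : ℤ)

/-- Action of a frame-transformation matrix on a rank-`r` tensor. -/
noncomputable def act {r : ℕ} (Λ : Matrix (Fin 4) (Fin 4) ℝ) (T : (Fin r → Fin 4) → ℝ) :
    (Fin r → Fin 4) → ℝ :=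
  fun a => ∑ b : Fin r → Fin 4, (∏ i, Λ (b i) (a i)) * T b

/-- The full contraction of `k` copies of a rank-`r` tensor `T`, determined by a pairing of the
`k·r` combined index slots.  The pairing is encoded by a fixed-point-free involution `p`
together with a set `S` of representatives containing exactly one slot from each pair
`{i, p i}`; each pair contributes one factor of the inverse metric `η`. -/
noncomputable def contractionCopies {r k : ℕ} (T : (Fin r → Fin 4) → ℝ)
    (p : Fin k × Fin r → Fin k × Fin r) (S : Finset (Fin k × Fin r)) : ℝ :=
  ∑ f : Fin k × Fin r → Fin 4,
    (∏ i ∈ S, eta (f i) (f (p i))) * ∏ m, T (fun j => f (m, j))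

/-!
Boost weight is additive under tensor products and each factor `η^{ab}` of a contraction pairs
indices of opposite weight (`1` with `2`, `3` with `3`, `4` with `4`), so a nonvanishing term of a
full contraction has total boost weight `0`. For a type III tensor every nonvanishing component has
negative boost weight, so every term of every contraction of `k > 0` copies vanishes. On the other
hand an `η`-orthogonal `Λ` is invertible, with inverse `η Λᵀ η`, so `Λ · T = 0` forces `T = 0`.
-/

def indexWeight (c : Fin 4) : ℤ := (if c = 0 then 1 else 0) - (if c = 1 then 1 else 0)

lemma bw_eq_sum_indexWeight {r : ℕ} (a : Fin r → Fin 4) : bw a = ∑ i, indexWeight (a i) := by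
  simp only [indexWeight, Finset.sum_sub_distrib, Finset.sum_boole, bw]

lemma indexWeight_add_eq_zero_of_eta_ne_zero {a b : Fin 4} (h : eta a b ≠ 0) :
    indexWeight a + indexWeight b = 0 := by
  fin_cases a <;> fin_cases b <;> simp_all [eta, indexWeight]

lemma sum_univ_eq_sum_add_involution {α M : Type*} [Fintype α] [DecidableEq α]
    [AddCommMonoid M] {p : α → α} (hp : Function.Involutive p) {S : Finset α}
    (hS : ∀ i, i ∈ S ↔ p i ∉ S) (g : α → M) : ∑ i, g i = ∑ i ∈ S, (g i + g (p i)) := by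
  rw [Finset.sum_add_distrib, ← Finset.sum_add_sum_compl S g]
  congr 1
  refine Finset.sum_nbij' p p (fun i hi => ?_) (fun i hi => ?_) (fun i _ => hp i)
    (fun i _ => hp i) (fun i _ => by rw [hp])
  · rw [Finset.mem_compl] at hi
    rwa [hS, hp]
  · rw [Finset.mem_compl, ← hS]
    exact hi

lemma sum_indexWeight_eq_zero_of_prod_eta_ne_zero {α : Type*} [Fintype α] [DecidableEq α]
    {p : α → α} (hp : Function.Involutive p) {S : Finset α} (hS : ∀ i, i ∈ S ↔ p i ∉ S)
    {f : α → Fin 4} (h : ∏ i ∈ S, eta (f i) (f (p i)) ≠ 0) : ∑ i, indexWeight (f i) = 0 := by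
  rw [sum_univ_eq_sum_add_involution hp hS]
  exact Finset.sum_eq_zero fun i hi =>
    indexWeight_add_eq_zero_of_eta_ne_zero (Finset.prod_ne_zero_iff.mp h i hi)

lemma sum_bw_neg_of_prod_ne_zero {r k : ℕ} {T : (Fin r → Fin 4) → ℝ}
    (hIII : ∀ a, 0 ≤ bw a → T a = 0) (hk : 0 < k) {f : Fin k × Fin r → Fin 4}
    (h : ∏ m, T (fun j => f (m, j)) ≠ 0) : ∑ m, bw (fun j => f (m, j)) < 0 := by
  have hneg : ∀ m, bw (fun j => f (m, j)) < 0 := fun m =>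
    not_le.mp fun hm => Finset.prod_ne_zero_iff.mp h m (Finset.mem_univ m) (hIII _ hm)
  exact Finset.sum_neg (fun m _ => hneg m) (Finset.univ_nonempty_iff.mpr ⟨⟨0, hk⟩⟩)

lemma contractionCopies_eq_zero {r k : ℕ} {T : (Fin r → Fin 4) → ℝ}
    (hIII : ∀ a, 0 ≤ bw a → T a = 0) (hk : 0 < k) {p : Fin k × Fin r → Fin k × Fin r}
    (hp : Function.Involutive p) {S : Finset (Fin k × Fin r)} (hS : ∀ i, i ∈ S ↔ p i ∉ S) :
    contractionCopies T p S = 0 := by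
  refine Finset.sum_eq_zero fun f _ => ?_
  by_contra hf
  obtain ⟨hη, hT⟩ := mul_ne_zero_iff.mp hf
  have hweight : ∑ x, indexWeight (f x) = ∑ m, bw (fun j => f (m, j)) := by
    simp only [Fintype.sum_prod_type, bw_eq_sum_indexWeight]
  have := sum_bw_neg_of_prod_ne_zero hIII hk hT
  rw [← hweight, sum_indexWeight_eq_zero_of_prod_eta_ne_zero hp hS hη] at this
  exact this.false

lemma act_act {r : ℕ} (M Λ : Matrix (Fin 4) (Fin 4) ℝ) (T : (Fin r → Fin 4) → ℝ) :
    act M (act Λ T) = act (Λ * M) T := by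
  funext a
  simp only [act, Finset.mul_sum]
  rw [Finset.sum_comm]
  refine Finset.sum_congr rfl fun c _ => ?_
  calc ∑ b : Fin r → Fin 4, (∏ i, M (b i) (a i)) * ((∏ i, Λ (c i) (b i)) * T c)
      = (∑ b : Fin r → Fin 4, ∏ i, Λ (c i) (b i) * M (b i) (a i)) * T c := by
        rw [Finset.sum_mul]
        refine Finset.sum_congr rfl fun b _ => ?_
        rw [Finset.prod_mul_distrib]
        ring
    _ = (∏ i, (Λ * M) (c i) (a i)) * T c := by
        simp only [Matrix.mul_apply]
        rw [Finset.prod_univ_sum, Fintype.piFinset_univ]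

lemma act_one {r : ℕ} (T : (Fin r → Fin 4) → ℝ) : act 1 T = T := by
  funext a
  simp only [act, Matrix.one_apply]
  rw [Fintype.sum_eq_single a fun b hb => ?_]
  · simp
  · obtain ⟨i, hi⟩ := Function.ne_iff.mp hb
    rw [Finset.prod_eq_zero (Finset.mem_univ i) (if_neg hi), zero_mul]

lemma act_zero {r : ℕ} (Λ : Matrix (Fin 4) (Fin 4) ℝ) :
    act Λ (0 : (Fin r → Fin 4) → ℝ) = 0 := by
  funext a
  simp [act]

lemma act_injective_of_mul_eq_one {r : ℕ} {Λ B : Matrix (Fin 4) (Fin 4) ℝ} (h : Λ * B = 1) :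
    Function.Injective (act (r := r) Λ) :=
  Function.LeftInverse.injective (g := act B) fun T => by rw [act_act, h, act_one]

lemma etaM_mul_self : etaM * etaM = 1 := by
  ext i j
  fin_cases i <;> fin_cases j <;>
    simp [etaM, eta, Matrix.mul_apply]

lemma mul_etaM_transpose_etaM_eq_one {Λ : Matrix (Fin 4) (Fin 4) ℝ}
    (hΛ : Λᵀ * etaM * Λ = etaM) : Λ * (etaM * Λᵀ * etaM) = 1 :=
  mul_eq_one_comm.mp <| by
    rw [Matrix.mul_assoc, Matrix.mul_assoc, ← Matrix.mul_assoc Λᵀ, hΛ, etaM_mul_self]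

/-- a nonzero tensor of alignment type III is not characterized by its scalar
polynomial invariants: every full contraction of copies of it vanishes (as for the zero tensor),
yet no `η`-orthogonal frame transformation maps it to the zero tensor. -/
theorem typeIII_not_characterized
    {r : ℕ} (T : (Fin r → Fin 4) → ℝ) (hT : T ≠ 0)
    (hIII : ∀ a, 0 ≤ bw a → T a = 0) :
    (∀ (k : ℕ), 0 < k → ∀ (p : Fin k × Fin r → Fin k × Fin r) (S : Finset (Fin k × Fin r)),
      p ∘ p = id → (∀ i, p i ≠ i) → (∀ i, i ∈ S ↔ p i ∉ S) →
      contractionCopies T p S = 0) ∧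
    (∀ Λ : Matrix (Fin 4) (Fin 4) ℝ, Λᵀ * etaM * Λ = etaM → act Λ T ≠ 0) := by
  refine ⟨fun k hk p S hpp _ hS => ?_, fun Λ hΛ hΛT => hT ?_⟩
  · exact contractionCopies_eq_zero hIII hk (fun i => congrFun hpp i) hS
  · apply act_injective_of_mul_eq_one (mul_etaM_transpose_etaM_eq_one hΛ)
    rw [hΛT, act_zero]
end
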